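/- arXiv:1710.11089 — 2 statements merged into one kernel-verified Lean document; each statement's English description precedes it below -/
import Mathlib

section
/- Let W be a symmetric n×n nonnegative matrix with all row sums positive, D the diagonal of row sums, T = D^{-1}W, 0 < γ < 1, Ψ = (I - γT)^{-1}, and L = D^{-1/2}(D - W)D^{-1/2}. If v is an eigenvector of Ψ with eigenvalue λ ≠ 0, then D^{1/2}v is an eigenvector of L with eigenvalue 1 - (1 - λ^{-1})/γ. -/
/-!
Since `Ψ v = λ v` with `λ ≠ 0`, `Ψ` is not the junk inverse `0`, so `M = 1 - γT` is invertible and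
`M v = λ⁻¹ v`; that is, `v` is an eigenvector of `T = D⁻¹W` with eigenvalue `c = (1 - λ⁻¹)/γ`, i.e.
`W v = c D v`. Conjugating by `D^{1/2}` then gives
`L D^{1/2} v = D^{-1/2} (D - W) v = (1 - c) D^{-1/2} D v = (1 - c) D^{1/2} v`.
-/

open Matrix

variable {ι K : Type*} [Fintype ι] [DecidableEq ι] [Field K]

theorem Matrix.isUnit_det_of_inv_mulVec_eq_smul {M : Matrix ι ι K} {v : ι → K} {μ : K}
    (hv : v ≠ 0) (hμ : μ ≠ 0) (h : M⁻¹ *ᵥ v = μ • v) : IsUnit M.det := by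
  by_contra hM
  rw [nonsing_inv_apply_not_isUnit M hM, zero_mulVec] at h
  exact smul_ne_zero hμ hv h.symm

theorem Matrix.mulVec_eq_inv_smul_of_inv_mulVec_eq_smul {M : Matrix ι ι K} {v : ι → K} {μ : K}
    (hv : v ≠ 0) (hμ : μ ≠ 0) (h : M⁻¹ *ᵥ v = μ • v) : M *ᵥ v = μ⁻¹ • v := by
  have hM := isUnit_det_of_inv_mulVec_eq_smul hv hμ h
  have hv' : μ • M *ᵥ v = v := by
    rw [← mulVec_smul, ← h, mulVec_mulVec, mul_nonsing_inv M hM, one_mulVec]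
  rwa [eq_inv_smul_iff₀ hμ]

theorem Matrix.mulVec_eq_smul_of_one_sub_smul_mulVec_eq_smul {T : Matrix ι ι K} {v : ι → K}
    {γ μ : K} (hγ : γ ≠ 0) (h : (1 - γ • T) *ᵥ v = μ • v) :
    T *ᵥ v = ((1 - μ) / γ) • v := by
  ext i
  have hi := congrFun h i
  simp only [sub_mulVec, one_mulVec, smul_mulVec, Pi.sub_apply, Pi.smul_apply,
    smul_eq_mul] at hi ⊢
  field_simp
  linear_combination -hi

theorem Matrix.mulVec_eq_smul_diagonal_mulVec_of_diagonal_inv_mul {d : ι → K}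
    (hd : ∀ i, d i ≠ 0) {W : Matrix ι ι K} {v : ι → K} {c : K}
    (h : (diagonal (fun i => (d i)⁻¹) * W) *ᵥ v = c • v) :
    W *ᵥ v = c • diagonal d *ᵥ v := by
  have hDT : diagonal d * (diagonal (fun i => (d i)⁻¹) * W) = W := by
    rw [← Matrix.mul_assoc, diagonal_mul_diagonal]
    simp [mul_inv_cancel₀ (hd _)]
  rw [← hDT, ← mulVec_mulVec, h, mulVec_smul]

theorem Matrix.normalizedLaplacian_mulVec_diagonal_mulVec {s d : ι → K} (hs : ∀ i, s i ≠ 0)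
    (hsd : ∀ i, s i * s i = d i) {W : Matrix ι ι K} {v : ι → K} {c : K}
    (h : W *ᵥ v = c • diagonal d *ᵥ v) :
    (diagonal (fun i => (s i)⁻¹) * (diagonal d - W) * diagonal (fun i => (s i)⁻¹)) *ᵥ
      (diagonal s *ᵥ v) = (1 - c) • diagonal s *ᵥ v := by
  have hSiS : diagonal (fun i => (s i)⁻¹) * diagonal s = 1 := by
    rw [diagonal_mul_diagonal]
    simp [inv_mul_cancel₀ (hs _)]
  have hSiD : diagonal (fun i => (s i)⁻¹) * diagonal d = diagonal s := by
    rw [diagonal_mul_diagonal]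
    congr 1
    funext i
    rw [← hsd, inv_mul_cancel_left₀ (hs i)]
  rw [mulVec_mulVec, Matrix.mul_assoc, hSiS, Matrix.mul_one, ← mulVec_mulVec, sub_mulVec, h,
    mulVec_sub, mulVec_smul, mulVec_mulVec, hSiD, sub_smul, one_smul]

theorem Matrix.diagonal_mulVec_ne_zero {s v : ι → K} (hs : ∀ i, s i ≠ 0) (hv : v ≠ 0) :
    diagonal s *ᵥ v ≠ 0 := by
  intro h
  refine hv (funext fun i => ?_)
  have hi := congrFun h i
  rw [mulVec_diagonal] at hi
  exact (mul_eq_zero.mp hi).resolve_left (hs i)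

theorem stmt_6_general (n : ℕ) (W : Matrix (Fin n) (Fin n) ℝ)
    (d : Fin n → ℝ) (hdpos : ∀ i, 0 < d i)
    (T : Matrix (Fin n) (Fin n) ℝ)
    (hT : T = Matrix.diagonal (fun i => (d i)⁻¹) * W)
    (γ : ℝ) (hγ0 : 0 < γ)
    (Ψ : Matrix (Fin n) (Fin n) ℝ)
    (hΨ : Ψ = ((1 : Matrix (Fin n) (Fin n) ℝ) - γ • T)⁻¹)
    (L : Matrix (Fin n) (Fin n) ℝ)
    (hL : L = Matrix.diagonal (fun i => (Real.sqrt (d i))⁻¹) *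
      (Matrix.diagonal d - W) * Matrix.diagonal (fun i => (Real.sqrt (d i))⁻¹))
    (v : Fin n → ℝ) (hv : v ≠ 0) (lam : ℝ) (hlam : lam ≠ 0)
    (heig : Ψ.mulVec v = lam • v) :
    L.mulVec ((Matrix.diagonal (fun i => Real.sqrt (d i))).mulVec v) =
      (1 - (1 - lam⁻¹) / γ) • (Matrix.diagonal (fun i => Real.sqrt (d i))).mulVec v ∧
    (Matrix.diagonal (fun i => Real.sqrt (d i))).mulVec v ≠ 0 := by
  have hs : ∀ i, Real.sqrt (d i) ≠ 0 := fun i => (Real.sqrt_pos.mpr (hdpos i)).ne'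
  have hM : (1 - γ • T) *ᵥ v = lam⁻¹ • v :=
    mulVec_eq_inv_smul_of_inv_mulVec_eq_smul hv hlam (hΨ ▸ heig)
  have hTv : T *ᵥ v = ((1 - lam⁻¹) / γ) • v :=
    mulVec_eq_smul_of_one_sub_smul_mulVec_eq_smul hγ0.ne' hM
  subst hT hL
  have hWv := mulVec_eq_smul_diagonal_mulVec_of_diagonal_inv_mul (fun i => (hdpos i).ne') hTv
  exact ⟨normalizedLaplacian_mulVec_diagonal_mulVec hs
    (fun i => Real.mul_self_sqrt (hdpos i).le) hWv, diagonal_mulVec_ne_zero hs hv⟩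

theorem stmt_6 (n : ℕ) (W : Matrix (Fin n) (Fin n) ℝ)
    (hsym : W.IsSymm) (hnonneg : ∀ i j, 0 ≤ W i j)
    (d : Fin n → ℝ) (hd : ∀ i, d i = ∑ j, W i j) (hdpos : ∀ i, 0 < d i)
    (T : Matrix (Fin n) (Fin n) ℝ)
    (hT : T = Matrix.diagonal (fun i => (d i)⁻¹) * W)
    (γ : ℝ) (hγ0 : 0 < γ) (hγ1 : γ < 1)
    (Ψ : Matrix (Fin n) (Fin n) ℝ)
    (hΨ : Ψ = ((1 : Matrix (Fin n) (Fin n) ℝ) - γ • T)⁻¹)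
    (L : Matrix (Fin n) (Fin n) ℝ)
    (hL : L = Matrix.diagonal (fun i => (Real.sqrt (d i))⁻¹) *
      (Matrix.diagonal d - W) * Matrix.diagonal (fun i => (Real.sqrt (d i))⁻¹))
    (v : Fin n → ℝ) (hv : v ≠ 0) (lam : ℝ) (hlam : lam ≠ 0)
    (heig : Ψ.mulVec v = lam • v) :
    L.mulVec ((Matrix.diagonal (fun i => Real.sqrt (d i))).mulVec v) =
      (1 - (1 - lam⁻¹) / γ) • (Matrix.diagonal (fun i => Real.sqrt (d i))).mulVec v ∧
    (Matrix.diagonal (fun i => Real.sqrt (d i))).mulVec v ≠ 0 :=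
  stmt_6_general n W d hdpos T hT γ hγ0 Ψ hΨ L hL v hv lam hlam heig
end

section
/- Let W be a symmetric n×n nonnegative matrix with all row sums positive, D the diagonal of row sums, T = D^{-1}W, 0 < γ < 1, Ψ = (I - γT)^{-1}, and L = D^{-1/2}(D - W)D^{-1/2}. If u is an eigenvector of L with eigenvalue μ and 1 - γ(1 - μ) ≠ 0, then D^{-1/2}u is an eigenvector of Ψ with eigenvalue 1/(1 - γ(1 - μ)). -/
/-!
With `v = D^{-1/2} u`, the equation `L u = μ u` is the generalized eigenproblem
`(D - W) v = μ D v`, i.e. `T v = (1 - μ) v`, so `(I - γ T) v = (1 - γ (1 - μ)) v`.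
As `T` is row-stochastic and `|γ| < 1`, the matrix `I - γ T` is strictly diagonally dominant,
hence invertible by Gershgorin, and applying its inverse `Ψ` gives the eigenvalue relation.
-/

open Matrix

namespace Matrix

variable {n : Type*} [Fintype n] [DecidableEq n]

section Field

variable {K : Type*} [Field K]

lemma diagonal_mulVec_ne_zero_s7 {s u : n → K} (hs : ∀ i, s i ≠ 0) (hu : u ≠ 0) :
    diagonal s *ᵥ u ≠ 0 := by
  contrapose! hu
  funext i
  simpa [mulVec_diagonal, hs i] using congrFun hu i

lemma inv_mulVec_eq_inv_smul {M : Matrix n n K} (hM : IsUnit M.det) {v : n → K} {c : K}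
    (hc : c ≠ 0) (hv : M *ᵥ v = c • v) : M⁻¹ *ᵥ v = c⁻¹ • v := by
  have h : v = c • M⁻¹ *ᵥ v := by
    rw [← mulVec_smul, ← hv, mulVec_mulVec, nonsing_inv_mul _ hM, one_mulVec]
  rw [h, smul_smul, inv_mul_cancel₀ hc, one_smul, ← h]

lemma mulVec_diagonal_inv_mulVec_of_conj_mulVec_eq_smul {s u : n → K} (hs : ∀ i, s i ≠ 0)
    {A : Matrix n n K} {μ : K} (h : (diagonal s⁻¹ * A * diagonal s⁻¹) *ᵥ u = μ • u) :
    A *ᵥ (diagonal s⁻¹ *ᵥ u) = μ • diagonal (s * s) *ᵥ (diagonal s⁻¹ *ᵥ u) := by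
  funext i
  have hi := congrFun h i
  simp only [← mulVec_mulVec, mulVec_diagonal, Pi.smul_apply, smul_eq_mul, Pi.mul_apply,
    Pi.inv_apply] at hi ⊢
  field_simp [hs i] at hi ⊢
  linear_combination hi

lemma diagonal_inv_mul_mulVec_eq_one_sub_smul {d v : n → K} (hd : ∀ i, d i ≠ 0)
    {W : Matrix n n K} {μ : K} (h : (diagonal d - W) *ᵥ v = μ • diagonal d *ᵥ v) :
    (diagonal d⁻¹ * W) *ᵥ v = (1 - μ) • v := by
  funext i
  have hi := congrFun h i
  simp only [← mulVec_mulVec, sub_mulVec, mulVec_diagonal, Pi.smul_apply, smul_eq_mul,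
    Pi.sub_apply, Pi.inv_apply] at hi ⊢
  field_simp [hd i]
  linear_combination -hi

end Field

lemma diagonal_inv_mul_mem_rowStochastic {W : Matrix n n ℝ} (hW : ∀ i j, 0 ≤ W i j)
    {d : n → ℝ} (hd : ∀ i, d i = ∑ j, W i j) (hdpos : ∀ i, 0 < d i) :
    diagonal d⁻¹ * W ∈ rowStochastic ℝ n := by
  refine mem_rowStochastic_iff_sum.2 ⟨fun i j => ?_, fun i => ?_⟩
  · simpa [diagonal_mul] using mul_nonneg (inv_nonneg.2 (hdpos i).le) (hW i j)
  · simp only [diagonal_mul, Pi.inv_apply, ← Finset.mul_sum, ← hd i]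
    exact inv_mul_cancel₀ (hdpos i).ne'

lemma isUnit_det_one_sub_smul_of_mem_rowStochastic {T : Matrix n n ℝ}
    (hT : T ∈ rowStochastic ℝ n) {γ : ℝ} (hγ : |γ| < 1) : IsUnit (1 - γ • T).det := by
  refine isUnit_iff_ne_zero.2 (det_ne_zero_of_sum_row_lt_diag fun k => ?_)
  have hoff : ∑ j ∈ Finset.univ.erase k, ‖(1 - γ • T) k j‖ = |γ| * (1 - T k k) := by
    rw [← sum_row_of_mem_rowStochastic hT k, ← Finset.sum_erase_add _ _ (Finset.mem_univ k),
      add_sub_cancel_right, Finset.mul_sum]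
    refine Finset.sum_congr rfl fun j hj => ?_
    rw [sub_apply, one_apply_ne (Finset.ne_of_mem_erase hj).symm, smul_apply, smul_eq_mul,
      zero_sub, norm_neg, Real.norm_eq_abs, abs_mul,
      abs_of_nonneg (nonneg_of_mem_rowStochastic hT)]
  have hTkk : 0 ≤ T k k := nonneg_of_mem_rowStochastic hT
  have hle : T k k ≤ 1 := le_one_of_mem_rowStochastic hT
  rw [hoff, sub_apply, one_apply_eq, smul_apply, smul_eq_mul, Real.norm_eq_abs]
  calc |γ| * (1 - T k k) < 1 - |γ| * T k k := by nlinarith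
    _ ≤ 1 - γ * T k k := by nlinarith [le_abs_self γ]
    _ ≤ |1 - γ * T k k| := le_abs_self _

end Matrix

theorem stmt_7_general (n : ℕ) (W : Matrix (Fin n) (Fin n) ℝ)
    (hnonneg : ∀ i j, 0 ≤ W i j)
    (d : Fin n → ℝ) (hd : ∀ i, d i = ∑ j, W i j) (hdpos : ∀ i, 0 < d i)
    (T : Matrix (Fin n) (Fin n) ℝ)
    (hT : T = Matrix.diagonal (fun i => (d i)⁻¹) * W)
    (γ : ℝ) (hγ0 : 0 < γ) (hγ1 : γ < 1)
    (Ψ : Matrix (Fin n) (Fin n) ℝ)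
    (hΨ : Ψ = ((1 : Matrix (Fin n) (Fin n) ℝ) - γ • T)⁻¹)
    (L : Matrix (Fin n) (Fin n) ℝ)
    (hL : L = Matrix.diagonal (fun i => (Real.sqrt (d i))⁻¹) *
      (Matrix.diagonal d - W) * Matrix.diagonal (fun i => (Real.sqrt (d i))⁻¹))
    (u : Fin n → ℝ) (hu : u ≠ 0) (μ : ℝ)
    (heig : L.mulVec u = μ • u) (hne : 1 - γ * (1 - μ) ≠ 0) :
    Ψ.mulVec ((Matrix.diagonal (fun i => (Real.sqrt (d i))⁻¹)).mulVec u) =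
      (1 / (1 - γ * (1 - μ))) • (Matrix.diagonal (fun i => (Real.sqrt (d i))⁻¹)).mulVec u ∧
    (Matrix.diagonal (fun i => (Real.sqrt (d i))⁻¹)).mulVec u ≠ 0 := by
  set s : Fin n → ℝ := fun i => Real.sqrt (d i)
  have hs : ∀ i, s i ≠ 0 := fun i => (Real.sqrt_pos.2 (hdpos i)).ne'
  have hss : s * s = d := funext fun i => Real.mul_self_sqrt (hdpos i).le
  set v := diagonal s⁻¹ *ᵥ u
  have hDWv : (diagonal d - W) *ᵥ v = μ • diagonal d *ᵥ v := by
    have h := mulVec_diagonal_inv_mulVec_of_conj_mulVec_eq_smul hs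
      (A := diagonal d - W) (hL ▸ heig)
    rwa [hss] at h
  have hTv : T *ᵥ v = (1 - μ) • v :=
    hT ▸ diagonal_inv_mul_mulVec_eq_one_sub_smul (fun i => (hdpos i).ne') hDWv
  have hMv : (1 - γ • T) *ᵥ v = (1 - γ * (1 - μ)) • v := by
    rw [sub_mulVec, one_mulVec, smul_mulVec, hTv, smul_smul, sub_smul, one_smul]
  have hM : IsUnit (1 - γ • T).det :=
    isUnit_det_one_sub_smul_of_mem_rowStochastic
      (hT ▸ diagonal_inv_mul_mem_rowStochastic hnonneg hd hdpos)
      (abs_lt.2 ⟨by linarith, hγ1⟩)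
  rw [hΨ, one_div]
  exact ⟨inv_mulVec_eq_inv_smul hM hne hMv,
    diagonal_mulVec_ne_zero_s7 (fun i => inv_ne_zero (hs i)) hu⟩

theorem stmt_7 (n : ℕ) (W : Matrix (Fin n) (Fin n) ℝ)
    (hsym : W.IsSymm) (hnonneg : ∀ i j, 0 ≤ W i j)
    (d : Fin n → ℝ) (hd : ∀ i, d i = ∑ j, W i j) (hdpos : ∀ i, 0 < d i)
    (T : Matrix (Fin n) (Fin n) ℝ)
    (hT : T = Matrix.diagonal (fun i => (d i)⁻¹) * W)
    (γ : ℝ) (hγ0 : 0 < γ) (hγ1 : γ < 1)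
    (Ψ : Matrix (Fin n) (Fin n) ℝ)
    (hΨ : Ψ = ((1 : Matrix (Fin n) (Fin n) ℝ) - γ • T)⁻¹)
    (L : Matrix (Fin n) (Fin n) ℝ)
    (hL : L = Matrix.diagonal (fun i => (Real.sqrt (d i))⁻¹) *
      (Matrix.diagonal d - W) * Matrix.diagonal (fun i => (Real.sqrt (d i))⁻¹))
    (u : Fin n → ℝ) (hu : u ≠ 0) (μ : ℝ)
    (heig : L.mulVec u = μ • u) (hne : 1 - γ * (1 - μ) ≠ 0) :
    Ψ.mulVec ((Matrix.diagonal (fun i => (Real.sqrt (d i))⁻¹)).mulVec u) =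
      (1 / (1 - γ * (1 - μ))) • (Matrix.diagonal (fun i => (Real.sqrt (d i))⁻¹)).mulVec u ∧
    (Matrix.diagonal (fun i => (Real.sqrt (d i))⁻¹)).mulVec u ≠ 0 :=
  stmt_7_general n W hnonneg d hd hdpos T hT γ hγ0 hγ1 Ψ hΨ L hL u hu μ heig hne
end
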